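/- arXiv:1411.7604 — 3 statements merged into one kernel-verified Lean document; each statement's English description precedes it below -/
import Mathlib

section
/- Let a ∈ ℝ be irrational and let R_a : ℝ/ℤ → ℝ/ℤ be the rotation R_a(x) = x + a (mod 1), where ℝ/ℤ carries the standard quotient metric. Then for every ε > 0 there exists an ε-pseudotrajectory (x_k)_{k≥0} of R_a such that for every p ∈ ℝ/ℤ one has sup_{k≥0} dist(x_k, R_a^k(p)) ≥ 1/4. In particular, R_a does not have the standard shadowing property. -/
/-!
Rotations are isometries, so errors in a pseudotrajectory are never corrected. Perturbing the
rotation angle by `δ = 1/(2n)` yields the `δ`-pseudotrajectory `x_k = k(a + δ)`, whose distance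
to the orbit of `p` is `dist (kδ) p`. Since `0δ = 0` and `nδ = 1/2` are antipodal, one of them is
at distance at least `1/4` from `p`.
-/

open Filter Set Topology

variable {X : Type*} [PseudoMetricSpace X]

def IsPseudoTrajectory (f : X → X) (ε : ℝ) (x : ℕ → X) : Prop :=
  ∀ k, dist (f (x k)) (x (k + 1)) ≤ ε

def HasShadowing (f : X → X) : Prop :=
  ∃ (ε₀ : ℝ) (σ : ℝ → ℝ), 0 < ε₀ ∧ (∀ ε > (0 : ℝ), 0 < σ ε) ∧ Tendsto σ (𝓝[>] 0) (𝓝 0) ∧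
    ∀ ε ∈ Ioo 0 ε₀, ∀ x : ℕ → X, IsPseudoTrajectory f ε x →
      ∃ p : X, ∀ k, dist (x k) (f^[k] p) < σ ε

lemma IsPseudoTrajectory.mono {f : X → X} {ε ε' : ℝ} {x : ℕ → X}
    (hx : IsPseudoTrajectory f ε x) (hε : ε ≤ ε') : IsPseudoTrajectory f ε' x :=
  fun k => (hx k).trans hε

lemma not_hasShadowing_of_forall_exists_isPseudoTrajectory {f : X → X} {c : ℝ} (hc : 0 < c)
    (h : ∀ ε > (0 : ℝ), ∃ x : ℕ → X, IsPseudoTrajectory f ε x ∧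
      ∀ p : X, c ≤ ⨆ k : ℕ, dist (x k) (f^[k] p)) :
    ¬ HasShadowing f := by
  rintro ⟨ε₀, σ, hε₀, -, hσ, hshadow⟩
  have hsmall : ∀ᶠ ε in 𝓝[>] 0, σ ε < c ∧ ε ∈ Ioo 0 ε₀ :=
    (hσ.eventually (gt_mem_nhds hc)).and (Ioo_mem_nhdsGT hε₀)
  obtain ⟨ε, hσε, hε⟩ := hsmall.exists
  obtain ⟨x, hx, hfar⟩ := h ε hε.1
  obtain ⟨p, hp⟩ := hshadow ε hε x hx
  exact (hσε.trans_le (hfar p)).not_ge (ciSup_le fun k => (hp k).le)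

lemma half_dist_le_ciSup_dist {u : ℕ → X} {p : X}
    (hbdd : BddAbove (range fun k => dist (u k) p)) (i j : ℕ) :
    dist (u i) (u j) / 2 ≤ ⨆ k, dist (u k) p := by
  have hi := le_ciSup hbdd i
  have hj := le_ciSup hbdd j
  linarith [dist_triangle_right (u i) (u j) p]

section SeminormedAddCommGroup

variable {G : Type*} [SeminormedAddCommGroup G] (a δ : G)

lemma isPseudoTrajectory_nsmul_add_add :
    IsPseudoTrajectory (· + a) ‖δ‖ (fun k => k • (a + δ)) := by
  intro k
  show dist (k • (a + δ) + a) ((k + 1) • (a + δ)) ≤ ‖δ‖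
  rw [dist_eq_norm, succ_nsmul, ← norm_neg]
  exact (congrArg norm (by abel)).le

lemma dist_nsmul_add_iterate_add (k : ℕ) (p : G) :
    dist (k • (a + δ)) ((· + a)^[k] p) = dist (k • δ) p := by
  rw [add_right_iterate_apply, nsmul_add, add_comm, dist_add_right]

end SeminormedAddCommGroup

namespace AddCircle

variable {T : ℝ} [Fact (0 < T)]

lemma exists_isPseudoTrajectory_forall_le_ciSup_dist (a : AddCircle T) {ε : ℝ} (hε : 0 < ε) :
    ∃ x : ℕ → AddCircle T, IsPseudoTrajectory (· + a) ε x ∧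
      ∀ p : AddCircle T, T / 4 ≤ ⨆ k : ℕ, dist (x k) ((· + a)^[k] p) := by
  have hT : 0 < T := Fact.out
  obtain ⟨n, hn⟩ := exists_nat_gt (T / (2 * ε))
  have hn0 : (0 : ℝ) < n := (by positivity : 0 < T / (2 * ε)).trans hn
  set δ : AddCircle T := ((T / (2 * n) : ℝ) : AddCircle T)
  have hδ : ‖δ‖ ≤ ε := by
    refine (QuotientAddGroup.norm_mk_le_norm (S := AddSubgroup.zmultiples T)).trans ?_
    rw [Real.norm_of_nonneg (by positivity), div_le_iff₀ (by positivity)]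
    rw [div_lt_iff₀ (by positivity)] at hn
    linarith
  have hnδ : n • δ = ((T / 2 : ℝ) : AddCircle T) := by
    rw [← coe_nsmul, nsmul_eq_mul]
    congr 1
    field_simp
  refine ⟨fun k => k • (a + δ), (isPseudoTrajectory_nsmul_add_add a δ).mono hδ, fun p => ?_⟩
  simp_rw [dist_nsmul_add_iterate_add]
  have hbdd : BddAbove (range fun k : ℕ => dist (k • δ) p) :=
    ⟨T / 2, by
      rintro _ ⟨k, rfl⟩
      simpa [dist_eq_norm, abs_of_pos hT] using norm_le_half_period T hT.ne' (x := k • δ - p)⟩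
  have hantipodal : dist ((0 : ℕ) • δ) (n • δ) = T / 2 := by
    rw [zero_nsmul, hnδ, dist_zero_left, norm_half_period_eq, abs_of_pos hT]
  have := half_dist_le_ciSup_dist hbdd 0 n
  rw [hantipodal] at this
  linarith

end AddCircle

theorem irrational_rotation_no_shadowing_general (a : ℝ) :
    (∀ ε > (0 : ℝ), ∃ x : ℕ → UnitAddCircle,
      (∀ k : ℕ, dist (x k + (a : UnitAddCircle)) (x (k + 1)) ≤ ε) ∧
      ∀ p : UnitAddCircle,
        (1 / 4 : ℝ) ≤ ⨆ k : ℕ, dist (x k) ((fun y : UnitAddCircle => y + a)^[k] p)) ∧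
    ¬ ∃ (ε₀ : ℝ) (σ : ℝ → ℝ), 0 < ε₀ ∧ (∀ ε > (0 : ℝ), 0 < σ ε) ∧
        Tendsto σ (nhdsWithin 0 (Ioi 0)) (nhds 0) ∧
        ∀ ε ∈ Ioo 0 ε₀, ∀ x : ℕ → UnitAddCircle,
          (∀ k : ℕ, dist (x k + (a : UnitAddCircle)) (x (k + 1)) ≤ ε) →
          ∃ p : UnitAddCircle,
            ∀ k : ℕ, dist (x k) ((fun y : UnitAddCircle => y + a)^[k] p) < σ ε := by
  have far := fun ε (hε : ε > (0 : ℝ)) =>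
    AddCircle.exists_isPseudoTrajectory_forall_le_ciSup_dist (T := 1) (a : UnitAddCircle) hε
  exact ⟨far, not_hasShadowing_of_forall_exists_isPseudoTrajectory (by norm_num) far⟩

/-- An irrational rotation of the circle admits, for every ε > 0, an
ε-pseudotrajectory staying at (sup-)distance at least 1/4 from every exact
orbit; in particular it does not have the standard shadowing property. -/
theorem irrational_rotation_no_shadowing (a : ℝ) (ha : Irrational a) :
    (∀ ε > (0 : ℝ), ∃ x : ℕ → UnitAddCircle,
      (∀ k : ℕ, dist (x k + (a : UnitAddCircle)) (x (k + 1)) ≤ ε) ∧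
      ∀ p : UnitAddCircle,
        (1 / 4 : ℝ) ≤ ⨆ k : ℕ, dist (x k) ((fun y : UnitAddCircle => y + a)^[k] p)) ∧
    ¬ ∃ (ε₀ : ℝ) (σ : ℝ → ℝ), 0 < ε₀ ∧ (∀ ε > (0 : ℝ), 0 < σ ε) ∧
        Tendsto σ (nhdsWithin 0 (Ioi 0)) (nhds 0) ∧
        ∀ ε ∈ Ioo 0 ε₀, ∀ x : ℕ → UnitAddCircle,
          (∀ k : ℕ, dist (x k + (a : UnitAddCircle)) (x (k + 1)) ≤ ε) →
          ∃ p : UnitAddCircle,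
            ∀ k : ℕ, dist (x k) ((fun y : UnitAddCircle => y + a)^[k] p) < σ ε :=
  irrational_rotation_no_shadowing_general a
end

section
/- Let s ∈ [√2, 2) and 0 < ε ≤ 1 − s/2. Define the sequence (x_k)_{k≥0} in [0,1] by x_0 = 1/2 and x_k = f_s^{k−1}(s/2 + ε) for k ≥ 1. Then: (i) (x_k) is an ε-pseudotrajectory of f_s; (ii) if y ∈ [0,1] and ω ∈ (0, (s−1)/2] satisfy |x_k − f_s^k(y)| ≤ ω for all k ≥ 0, and n ∈ ℕ is such that for every 0 ≤ k < n the point 1/2 does not lie in the open interval with endpoints f_s^k(f_s^2(y)) and f_s^k(x_2), then ω ≥ s^{n+1}·ε. -/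
/-!
Write `f` for the tent map. Shadowing `x₁ = s / 2 + ε` within `ω ≤ (s - 1) / 2` forces
`f y ≥ 1 / 2`; since also `f y ≤ s / 2 < x₁`, both points lie right of the critical point and
`|x₂ - f² y| = s · (x₁ - f y) ≥ s ε`. As long as two orbits do not straddle the critical point,
the tent map multiplies their distance by exactly `s`, so after `n` more steps the distance
is at least `s^(n+1) ε`.
-/

open Set

/-- The tent map with slope `s`, extended to all of ℝ. -/
noncomputable def tentMap (s x : ℝ) : ℝ := if x ≤ 1 / 2 then s * x else s * (1 - x)

section

variable {s : ℝ}

lemma tentMap_of_le {x : ℝ} (h : x ≤ 1 / 2) : tentMap s x = s * x := if_pos h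

lemma tentMap_of_ge {x : ℝ} (h : 1 / 2 ≤ x) : tentMap s x = s * (1 - x) := by
  rcases h.lt_or_eq with h | rfl
  · exact if_neg h.not_ge
  · rw [tentMap_of_le le_rfl]; ring

lemma tentMap_le_half_mul (hs : 0 ≤ s) (x : ℝ) : tentMap s x ≤ s / 2 := by
  rcases le_total x (1 / 2) with h | h
  · rw [tentMap_of_le h]; nlinarith
  · rw [tentMap_of_ge h]; nlinarith

lemma abs_tentMap_sub_tentMap (hs : 0 ≤ s) {a b : ℝ}
    (h : (1 / 2 : ℝ) ∉ Ioo (min a b) (max a b)) :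
    |tentMap s a - tentMap s b| = s * |a - b| := by
  rw [mem_Ioo, not_and_or, not_lt, not_lt, le_min_iff, max_le_iff] at h
  rcases h with ⟨ha, hb⟩ | ⟨ha, hb⟩
  · rw [tentMap_of_ge ha, tentMap_of_ge hb, show s * (1 - a) - s * (1 - b) = s * (b - a) by ring,
      abs_mul, abs_of_nonneg hs, abs_sub_comm]
  · rw [tentMap_of_le ha, tentMap_of_le hb, ← mul_sub, abs_mul, abs_of_nonneg hs]

lemma abs_tentMap_iterate_sub_iterate (hs : 0 ≤ s) {a b : ℝ} {n : ℕ}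
    (h : ∀ k < n, (1 / 2 : ℝ) ∉
      Ioo (min ((tentMap s)^[k] a) ((tentMap s)^[k] b))
        (max ((tentMap s)^[k] a) ((tentMap s)^[k] b))) :
    |(tentMap s)^[n] a - (tentMap s)^[n] b| = s ^ n * |a - b| := by
  induction n with
  | zero => simp
  | succ n ih =>
    rw [Function.iterate_succ_apply', Function.iterate_succ_apply',
      abs_tentMap_sub_tentMap hs (h n n.lt_succ_self), ih fun k hk => h k (hk.trans n.lt_succ_self),
      pow_succ]
    ring

end

theorem tent_map_critical_pseudotrajectory_lower_bound_general
    (s : ℝ)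
    (ε : ℝ) (hε : 0 < ε)
    (x : ℕ → ℝ)
    (hx0 : x 0 = 1 / 2)
    (hxk : ∀ k : ℕ, 1 ≤ k → x k = (tentMap s)^[k - 1] (s / 2 + ε)) :
    (∀ k : ℕ, |tentMap s (x k) - x (k + 1)| ≤ ε) ∧
    ∀ y ∈ Icc (0 : ℝ) 1, ∀ ω : ℝ, 0 < ω → ω ≤ (s - 1) / 2 →
      (∀ k : ℕ, |x k - (tentMap s)^[k] y| ≤ ω) →
      ∀ n : ℕ,
        (∀ k < n, (1 / 2 : ℝ) ∉
          Ioo (min ((tentMap s)^[k] ((tentMap s)^[2] y)) ((tentMap s)^[k] (x 2)))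
              (max ((tentMap s)^[k] ((tentMap s)^[2] y)) ((tentMap s)^[k] (x 2)))) →
        s ^ (n + 1) * ε ≤ ω := by
  have hx : ∀ k, x (k + 1) = (tentMap s)^[k] (s / 2 + ε) := fun k => hxk (k + 1) k.succ_pos
  refine ⟨?_, fun y _ ω hω hωs hshadow n hsep => ?_⟩
  · rintro (_ | k)
    · rw [hx0, hx 0, tentMap_of_le le_rfl, Function.iterate_zero_apply,
        show s * (1 / 2) - (s / 2 + ε) = -ε by ring, abs_neg, abs_of_pos hε]
    · rw [hx, hx, Function.iterate_succ_apply', sub_self, abs_zero]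
      exact hε.le
  have hs : 0 ≤ s := by linarith
  have hTy_le : tentMap s y ≤ s / 2 := tentMap_le_half_mul hs y
  have hTy_ge : 1 / 2 ≤ tentMap s y := by
    have h := (abs_le.1 (hshadow 1)).2
    rw [hx 0, Function.iterate_zero_apply, Function.iterate_one] at h
    linarith
  have hgap : s * ε ≤ |x 2 - (tentMap s)^[2] y| := by
    rw [hx 1, Function.iterate_one, Function.iterate_succ_apply' _ 1, Function.iterate_one,
      abs_tentMap_sub_tentMap hs fun h => (le_min (by linarith) hTy_ge).not_gt h.1]
    exact mul_le_mul_of_nonneg_left (by rw [abs_of_nonneg] <;> linarith) hs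
  calc s ^ (n + 1) * ε = s ^ n * (s * ε) := by ring
    _ ≤ s ^ n * |(tentMap s)^[2] y - x 2| := by
      rw [abs_sub_comm]; exact mul_le_mul_of_nonneg_left hgap (pow_nonneg hs n)
    _ = |(tentMap s)^[n] ((tentMap s)^[2] y) - (tentMap s)^[n] (x 2)| :=
      (abs_tentMap_iterate_sub_iterate hs hsep).symm
    _ = |x (n + 2) - (tentMap s)^[n + 2] y| := by
      rw [abs_sub_comm, ← Function.iterate_add_apply, (hx 1 : x 2 = _),
        ← Function.iterate_add_apply, ← hx]
    _ ≤ ω := hshadow (n + 2)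

/-- The pseudotrajectory obtained by pushing the critical value up by ε is an
ε-pseudotrajectory, and shadowing it with accuracy ω forces ω ≥ s^{n+1}·ε
as long as the pushed orbit and the exact orbit stay on one side of the
critical point. -/
theorem tent_map_critical_pseudotrajectory_lower_bound
    (s : ℝ) (hs : Real.sqrt 2 ≤ s) (hs2 : s < 2)
    (ε : ℝ) (hε : 0 < ε) (hε' : ε ≤ 1 - s / 2)
    (x : ℕ → ℝ)
    (hx0 : x 0 = 1 / 2)
    (hxk : ∀ k : ℕ, 1 ≤ k → x k = (tentMap s)^[k - 1] (s / 2 + ε)) :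
    (∀ k : ℕ, |tentMap s (x k) - x (k + 1)| ≤ ε) ∧
    ∀ y ∈ Icc (0 : ℝ) 1, ∀ ω : ℝ, 0 < ω → ω ≤ (s - 1) / 2 →
      (∀ k : ℕ, |x k - (tentMap s)^[k] y| ≤ ω) →
      ∀ n : ℕ,
        (∀ k < n, (1 / 2 : ℝ) ∉
          Ioo (min ((tentMap s)^[k] ((tentMap s)^[2] y)) ((tentMap s)^[k] (x 2)))
              (max ((tentMap s)^[k] ((tentMap s)^[2] y)) ((tentMap s)^[k] (x 2)))) →
        s ^ (n + 1) * ε ≤ ω :=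
  tent_map_critical_pseudotrajectory_lower_bound_general s ε hε x hx0 hxk
end

section
/- The set of parameters s ∈ [√2,2] for which the critical point 1/2 is periodic under the tent map f_s (i.e. there exists N ≥ 1 with f_s^N(1/2) = 1/2) is dense in [√2,2] and has Lebesgue measure zero. -/
open Set MeasureTheory

/-!
Suppose no parameter in some `[a, b] ⊆ (1, 2]` makes `1/2` periodic. By the intermediate value
theorem no iterate `f_s^N(1/2)` can cross `1/2` as `s` moves in `[a, b]`, so the itinerary of `1/2`
is the same for all these `s`. Unwinding the tent map along an itinerary gives the kneading
identity `f_s^N(x) = ε_N s^N (x - ∑_{k<N} c_k s^{-k})` with `ε_N = ±1` and `c_k ∈ {-1, 0, 1}`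
determined by the itinerary; since the orbit stays in `[0, 1]`, the power series `∑ c_k t^k`
equals `1/2` for all `t ∈ [1/b, 1/a]`, hence at `t = 0` by the identity theorem, which is
impossible as `c_0 ∈ {0, 1}`.

For the measure, along its own itinerary `f_s^N(1/2)` is a polynomial in `s` with rational
coefficients and zero constant term, so every periodic parameter is algebraic, and there are
only countably many algebraic numbers.
-/

open Filter Topology Polynomial

theorem lt_iff_lt_of_continuousOn_of_forall_ne {f : ℝ → ℝ} {a b c : ℝ} (hab : a ≤ b)
    (hf : ContinuousOn f (Icc a b)) (hne : ∀ t ∈ Icc a b, f t ≠ c) : c < f a ↔ c < f b := by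
  by_contra hiff
  have hc : c ∈ uIcc (f a) (f b) := by
    rw [Set.mem_uIcc]
    by_cases ha : c < f a <;> by_cases hb : c < f b <;>
      simp_all [le_of_lt, not_lt]
  obtain ⟨t, ht, hft⟩ := intermediate_value_uIcc (by rwa [uIcc_of_le hab]) hc
  exact hne t (by rwa [uIcc_of_le hab] at ht) hft

theorem Icc_subset_closure_of_forall_exists_mem_Icc {S : Set ℝ} {p q : ℝ} (hpq : p < q)
    (h : ∀ a b, p ≤ a → a < b → b ≤ q → ∃ s ∈ Icc a b, s ∈ S) : Icc p q ⊆ closure S := by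
  intro x hx
  rw [Metric.mem_closure_iff]
  intro ε hε
  obtain ⟨s, ⟨hsa, hsb⟩, hsS⟩ := h (max p (x - ε / 2)) (min q (x + ε / 2))
    (le_max_left _ _)
    (max_lt (lt_min hpq (by linarith [hx.1])) (lt_min (by linarith [hx.2]) (by linarith)))
    (min_le_left _ _)
  refine ⟨s, hsS, ?_⟩
  rw [Real.dist_eq, abs_lt]
  constructor <;> linarith [le_max_right p (x - ε / 2), min_le_right q (x + ε / 2)]

theorem coeff_zero_eq_of_forall_hasSum_pow {c : ℕ → ℝ} {C L : ℝ} {U : Set ℝ}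
    (hc : ∀ k, |c k| ≤ C) (hU : IsOpen U) (hUne : U.Nonempty) (hU1 : U ⊆ Metric.ball 0 1)
    (hsum : ∀ t ∈ U, HasSum (fun k => c k * t ^ k) L) : c 0 = L := by
  set p := FormalMultilinearSeries.ofScalars ℝ c
  have hrad : 1 ≤ p.radius := by
    refine p.le_radius_of_bound C fun n => ?_
    simpa [p, FormalMultilinearSeries.ofScalars_norm] using hc n
  have hanalytic : AnalyticOnNhd ℝ (FormalMultilinearSeries.ofScalarsSum (E := ℝ) c)
      (Metric.ball 0 1) := by
    refine (p.hasFPowerSeriesOnBall (zero_lt_one.trans_le hrad)).analyticOnNhd.mono fun t ht => ?_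
    rw [Metric.mem_eball, edist_dist]
    refine lt_of_lt_of_le ?_ hrad
    simpa using ht
  obtain ⟨z, hz⟩ := hUne
  have hconst : FormalMultilinearSeries.ofScalarsSum (E := ℝ) c =ᶠ[𝓝 z] fun _ => L := by
    filter_upwards [hU.mem_nhds hz] with t ht
    exact (FormalMultilinearSeries.ofScalars_sum_eq c t).trans (hsum t ht).tsum_eq
  simpa using hanalytic.eqOn_of_preconnected_of_eventuallyEq analyticOnNhd_const
    (convex_ball 0 1).isPreconnected (hU1 hz) hconst (Metric.mem_ball_self one_pos)

theorem continuous_tentMap_uncurry : Continuous (Function.uncurry tentMap) := by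
  refine Continuous.if_le (by fun_prop) (by fun_prop) continuous_snd continuous_const ?_
  intro p hp
  rw [hp]
  ring

theorem continuous_tentMap_iterate (x : ℝ) (N : ℕ) :
    Continuous fun s => (tentMap s)^[N] x := by
  induction N with
  | zero => exact continuous_const
  | succ n ih =>
    simp only [Function.iterate_succ_apply']
    exact continuous_tentMap_uncurry.comp (continuous_id.prodMk ih)

theorem mapsTo_tentMap_Icc {s : ℝ} (hs0 : 0 ≤ s) (hs2 : s ≤ 2) :
    MapsTo (tentMap s) (Icc 0 1) (Icc 0 1) := by
  rintro x ⟨hx0, hx1⟩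
  unfold tentMap
  split_ifs <;> constructor <;> nlinarith

/-- `true` records a visit to the right half `(1/2, 1]`, on which `tentMap s` reverses
orientation. -/
noncomputable def itinerary (s x : ℝ) (n : ℕ) : Bool := decide (1 / 2 < (tentMap s)^[n] x)

theorem tentMap_iterate_succ (s x : ℝ) (n : ℕ) :
    (tentMap s)^[n + 1] x =
      if itinerary s x n then s * (1 - (tentMap s)^[n] x) else s * (tentMap s)^[n] x := by
  rw [Function.iterate_succ_apply', tentMap, itinerary]
  by_cases h : 1 / 2 < (tentMap s)^[n] x
  · rw [if_neg (not_le.2 h), if_pos (decide_eq_true h)]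
  · rw [if_pos (not_lt.1 h), if_neg (by simpa using h)]

theorem itinerary_eq_of_forall_iterate_ne {a s x : ℝ} (has : a ≤ s)
    (hne : ∀ t ∈ Icc a s, ∀ N, 1 ≤ N → (tentMap t)^[N] x ≠ 1 / 2) :
    itinerary s x = itinerary a x := by
  funext N
  rcases Nat.eq_zero_or_pos N with rfl | hN
  · rfl
  · simp only [itinerary, decide_eq_decide]
    exact (lt_iff_lt_of_continuousOn_of_forall_ne has
      (continuous_tentMap_iterate x N).continuousOn fun t ht => hne t ht N hN).symm

def kneadingSign (σ : ℕ → Bool) : ℕ → ℝ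
  | 0 => 1
  | n + 1 => if σ n then -kneadingSign σ n else kneadingSign σ n

def kneadingCoeff (σ : ℕ → Bool) (n : ℕ) : ℝ := if σ n then kneadingSign σ n else 0

theorem abs_kneadingSign (σ : ℕ → Bool) (n : ℕ) : |kneadingSign σ n| = 1 := by
  induction n with
  | zero => simp [kneadingSign]
  | succ n ih => by_cases h : σ n <;> simp [kneadingSign, h, ih]

theorem abs_kneadingCoeff_le_one (σ : ℕ → Bool) (n : ℕ) : |kneadingCoeff σ n| ≤ 1 := by
  by_cases h : σ n <;> simp [kneadingCoeff, h, abs_kneadingSign]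

theorem kneadingCoeff_zero_ne_half (σ : ℕ → Bool) : kneadingCoeff σ 0 ≠ 1 / 2 := by
  by_cases h : σ 0 <;> norm_num [kneadingCoeff, kneadingSign, h]

theorem kneadingSign_mul_tentMap_iterate {s : ℝ} (hs : s ≠ 0) (x : ℝ) (N : ℕ) :
    kneadingSign (itinerary s x) N * (tentMap s)^[N] x * s⁻¹ ^ N =
      x - ∑ k ∈ Finset.range N, kneadingCoeff (itinerary s x) k * s⁻¹ ^ k := by
  induction N with
  | zero => simp [kneadingSign]
  | succ n ih =>
    have hss : s * s⁻¹ = 1 := mul_inv_cancel₀ hs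
    rw [tentMap_iterate_succ, Finset.sum_range_succ, pow_succ]
    by_cases h : itinerary s x n
    · have hcoeff : kneadingCoeff (itinerary s x) n = kneadingSign (itinerary s x) n := if_pos h
      simp only [kneadingSign, hcoeff, h, if_true]
      linear_combination
        ih - kneadingSign (itinerary s x) n * (1 - (tentMap s)^[n] x) * s⁻¹ ^ n * hss
    · have hcoeff : kneadingCoeff (itinerary s x) n = 0 := if_neg h
      simp only [kneadingSign, hcoeff, h, if_false, Bool.false_eq_true]
      linear_combination
        ih + kneadingSign (itinerary s x) n * (tentMap s)^[n] x * s⁻¹ ^ n * hss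

theorem hasSum_kneadingCoeff_mul_inv_pow {s x : ℝ} (hs1 : 1 < s) (hs2 : s ≤ 2)
    (hx : x ∈ Icc 0 1) :
    HasSum (fun k => kneadingCoeff (itinerary s x) k * s⁻¹ ^ k) x := by
  have hs0 : 0 < s := zero_lt_one.trans hs1
  have ht0 : 0 ≤ s⁻¹ := inv_nonneg.2 hs0.le
  have ht1 : s⁻¹ < 1 := inv_lt_one_of_one_lt₀ hs1
  have hsummable : Summable fun k => kneadingCoeff (itinerary s x) k * s⁻¹ ^ k := by
    refine Summable.of_norm_bounded (summable_geometric_of_lt_one ht0 ht1) fun k => ?_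
    rw [norm_mul, norm_pow, Real.norm_of_nonneg ht0, Real.norm_eq_abs]
    exact mul_le_of_le_one_left (by positivity) (abs_kneadingCoeff_le_one _ k)
  rw [hsummable.hasSum_iff_tendsto_nat]
  have hremainder : Tendsto
      (fun N => kneadingSign (itinerary s x) N * (tentMap s)^[N] x * s⁻¹ ^ N) atTop (𝓝 0) := by
    refine squeeze_zero_norm (fun N => ?_) (tendsto_pow_atTop_nhds_zero_of_lt_one ht0 ht1)
    have horbit := (mapsTo_tentMap_Icc hs0.le hs2).iterate N hx
    rw [norm_mul, norm_mul, Real.norm_eq_abs, abs_kneadingSign, one_mul, norm_pow,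
      Real.norm_of_nonneg ht0, Real.norm_of_nonneg horbit.1]
    exact mul_le_of_le_one_left (by positivity) horbit.2
  have hpartial : ∀ N, ∑ k ∈ Finset.range N, kneadingCoeff (itinerary s x) k * s⁻¹ ^ k =
      x - kneadingSign (itinerary s x) N * (tentMap s)^[N] x * s⁻¹ ^ N := fun N => by
    rw [kneadingSign_mul_tentMap_iterate hs0.ne']
    ring
  simpa only [hpartial, sub_zero] using tendsto_const_nhds.sub hremainder

theorem exists_tentMap_iterate_half_eq_half {a b : ℝ} (ha : 1 < a) (hab : a < b) (hb : b ≤ 2) :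
    ∃ s ∈ Icc a b, ∃ N : ℕ, 1 ≤ N ∧ (tentMap s)^[N] (1 / 2) = 1 / 2 := by
  by_contra! hne
  have ha0 : 0 < a := zero_lt_one.trans ha
  have hsum : ∀ t ∈ Ioo b⁻¹ a⁻¹,
      HasSum (fun k => kneadingCoeff (itinerary a (1 / 2)) k * t ^ k) (1 / 2) := by
    intro t ht
    have ht0 : 0 < t := (inv_pos.2 (ha0.trans hab)).trans ht.1
    have hmem : t⁻¹ ∈ Icc a b :=
      ⟨(lt_inv_comm₀ ha0 ht0).2 ht.2 |>.le, (inv_lt_comm₀ ht0 (ha0.trans hab)).2 ht.1 |>.le⟩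
    rw [← itinerary_eq_of_forall_iterate_ne hmem.1 fun s hs => hne s ⟨hs.1, hs.2.trans hmem.2⟩]
    simpa using hasSum_kneadingCoeff_mul_inv_pow (ha.trans_le hmem.1) (hmem.2.trans hb)
      (x := 1 / 2) ⟨by norm_num, by norm_num⟩
  have hsub : Ioo b⁻¹ a⁻¹ ⊆ Metric.ball 0 1 := fun t ht => by
    have ht0 : 0 < t := (inv_pos.2 (ha0.trans hab)).trans ht.1
    rw [Metric.mem_ball, Real.dist_0_eq_abs, abs_of_pos ht0]
    exact ht.2.trans (inv_lt_one_of_one_lt₀ ha)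
  exact kneadingCoeff_zero_ne_half _ <| coeff_zero_eq_of_forall_hasSum_pow
    (abs_kneadingCoeff_le_one _) isOpen_Ioo (nonempty_Ioo.2 (inv_strictAnti₀ ha0 hab)) hsub hsum

noncomputable def orbitPoly (x : ℚ) (σ : ℕ → Bool) : ℕ → ℚ[X]
  | 0 => C x
  | n + 1 => if σ n then X * (1 - orbitPoly x σ n) else X * orbitPoly x σ n

theorem aeval_orbitPoly_itinerary (s : ℝ) (x : ℚ) (N : ℕ) :
    aeval s (orbitPoly x (itinerary s x) N) = (tentMap s)^[N] x := by
  induction N with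
  | zero => simp [orbitPoly]
  | succ n ih =>
    rw [tentMap_iterate_succ, orbitPoly]
    split_ifs <;> simp [ih]

theorem coeff_orbitPoly_succ_zero (x : ℚ) (σ : ℕ → Bool) (n : ℕ) :
    (orbitPoly x σ (n + 1)).coeff 0 = 0 := by
  rw [orbitPoly]
  split_ifs <;> exact coeff_X_mul_zero _

theorem isAlgebraic_of_tentMap_iterate_eq {s : ℝ} {x : ℚ} (hx : x ≠ 0) {N : ℕ} (hN : 1 ≤ N)
    (hper : (tentMap s)^[N] x = x) : IsAlgebraic ℚ s := by
  obtain ⟨n, rfl⟩ := Nat.exists_eq_add_of_le' hN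
  refine ⟨orbitPoly x (itinerary s x) (n + 1) - C x, fun h => hx ?_, ?_⟩
  · simpa [coeff_orbitPoly_succ_zero] using congrArg (coeff · 0) h
  · simp [aeval_orbitPoly_itinerary, hper]

/-- The set of parameters s ∈ [√2,2] for which the critical point 1/2 is
periodic under f_s is dense in [√2,2] and has Lebesgue measure zero. -/
theorem tent_map_periodic_parameters_dense_and_null :
    Icc (Real.sqrt 2) 2 ⊆
      closure {s : ℝ | s ∈ Icc (Real.sqrt 2) 2 ∧
        ∃ N : ℕ, 1 ≤ N ∧ (tentMap s)^[N] (1 / 2) = 1 / 2} ∧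
    volume {s : ℝ | s ∈ Icc (Real.sqrt 2) 2 ∧
        ∃ N : ℕ, 1 ≤ N ∧ (tentMap s)^[N] (1 / 2) = 1 / 2} = 0 := by
  constructor
  · have hsqrt2 : Real.sqrt 2 < 2 := Real.sqrt_two_lt_three_halves.trans (by norm_num)
    refine Icc_subset_closure_of_forall_exists_mem_Icc hsqrt2 fun a b ha hab hb => ?_
    obtain ⟨s, hs, hper⟩ :=
      exists_tentMap_iterate_half_eq_half (Real.one_lt_sqrt_two.trans_le ha) hab hb
    exact ⟨s, hs, ⟨ha.trans hs.1, hs.2.trans hb⟩, hper⟩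
  · refine measure_mono_null (fun s ⟨_, N, hN, hper⟩ => ?_)
      ((Algebraic.countable ℚ ℝ).measure_zero volume)
    exact isAlgebraic_of_tentMap_iterate_eq (x := 1 / 2) (by norm_num) hN (by simpa using hper)
end
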